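/- Let Y be an n×n positive semidefinite Hermitian matrix. Then for each 1 ≤ k ≤ n, the sum of the k largest eigenvalues of Y equals min over t ≥ 0 of k·t + Tr((Y − tI)_+), where (H)_+ denotes the positive part of a Hermitian matrix H. -/

import Mathlib

/-!
By the functional calculus `(Y - tI)₊ = f(Y)` with `f(x) = (x - t)⁺`, so its trace is
`∑ᵢ (λᵢ - t)⁺` and the statement is about real numbers. For every `t` and every `k`-set `s` of
indices, `∑_{i ∈ s} λᵢ ≤ k t + ∑ᵢ (λᵢ - t)⁺` because `λᵢ ≤ t + (λᵢ - t)⁺`. Equality holds when `s`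
carries a maximal `k`-sum and `t` is the smallest `λᵢ` on `s`: an exchange argument shows that no
`λⱼ` off `s` exceeds `t`, so `(λᵢ - t)⁺` vanishes off `s`.
-/

open Matrix ComplexOrder

/-- The square root of a positive semidefinite matrix, as defined in the older Mathlib
(`Matrix.PosSemidef.sqrt`, since removed). -/
noncomputable def Matrix.PosSemidef.sqrt {m : Type*} [Fintype m] [DecidableEq m] {𝕜 : Type*}
    [RCLike 𝕜] {A : Matrix m m 𝕜} (hA : A.PosSemidef) : Matrix m m 𝕜 :=
  hA.1.eigenvectorUnitary.1 * diagonal ((↑) ∘ Real.sqrt ∘ hA.1.eigenvalues) *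
  (star hA.1.eigenvectorUnitary : Matrix m m 𝕜)

lemma Matrix.PosSemidef.posSemidef_sqrt {m : Type*} [Fintype m] [DecidableEq m] {𝕜 : Type*}
    [RCLike 𝕜] {A : Matrix m m 𝕜} (hA : A.PosSemidef) : PosSemidef hA.sqrt := by
  apply PosSemidef.mul_mul_conjTranspose_same
  refine posSemidef_diagonal_iff.mpr fun i ↦ ?_
  rw [Function.comp_apply, RCLike.nonneg_iff]
  constructor
  · simp only [RCLike.ofReal_re]; exact Real.sqrt_nonneg _
  · simp only [RCLike.ofReal_im]

namespace Heron

variable {n : ℕ}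

def WeakMaj {n : ℕ} (x y : Fin n → ℝ) : Prop :=
  ∀ s : Finset (Fin n), ∃ t : Finset (Fin n),
    t.card = s.card ∧ ∑ i ∈ s, x i ≤ ∑ i ∈ t, y i

def Maj {n : ℕ} (x y : Fin n → ℝ) : Prop :=
  WeakMaj x y ∧ ∑ i, x i = ∑ i, y i

lemma sandwich_posSemidef {S T : Matrix (Fin n) (Fin n) ℂ} (hS : S.IsHermitian)
    (hT : T.PosSemidef) : (S * T * S).PosSemidef := by
  have h := hT.mul_mul_conjTranspose_same S
  rwa [hS.eq] at h

noncomputable def geomMean {A B : Matrix (Fin n) (Fin n) ℂ}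
    (hA : A.PosDef) (hB : B.PosDef) : Matrix (Fin n) (Fin n) ℂ :=
  hA.posSemidef.sqrt *
    (sandwich_posSemidef hA.posSemidef.posSemidef_sqrt.isHermitian.inv
        hB.posSemidef).sqrt *
    hA.posSemidef.sqrt

lemma geomMean_posSemidef {A B : Matrix (Fin n) (Fin n) ℂ}
    (hA : A.PosDef) (hB : B.PosDef) : (geomMean hA hB).PosSemidef :=
  sandwich_posSemidef hA.posSemidef.posSemidef_sqrt.isHermitian
    (Matrix.PosSemidef.posSemidef_sqrt _)

noncomputable def specMean {A B : Matrix (Fin n) (Fin n) ℂ}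
    (hA : A.PosDef) (hB : B.PosDef) : Matrix (Fin n) (Fin n) ℂ :=
  (geomMean_posSemidef hA.inv hB).sqrt * A * (geomMean_posSemidef hA.inv hB).sqrt

def HasPosSpectrum (M : Matrix (Fin n) (Fin n) ℂ) : Prop :=
  ∀ z ∈ spectrum ℂ M, 0 < z.re ∧ z.im = 0

def IsPrincipalSqrt (M S : Matrix (Fin n) (Fin n) ℂ) : Prop :=
  S * S = M ∧ HasPosSpectrum S

noncomputable def absMat (Y : Matrix (Fin n) (Fin n) ℂ) : Matrix (Fin n) (Fin n) ℂ :=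
  (Matrix.posSemidef_conjTranspose_mul_self Y).sqrt

noncomputable def posPart (H : Matrix (Fin n) (Fin n) ℂ) : Matrix (Fin n) (Fin n) ℂ :=
  ((1 : ℂ) / 2) • (absMat H + H)

section ThresholdSum

variable {ι : Type*} (lam : ι → ℝ)

theorem apply_le_of_mem_of_notMem_of_sum_maximal {s : Finset ι}
    (h_max : ∀ s' : Finset ι, s'.card = s.card → ∑ i ∈ s', lam i ≤ ∑ i ∈ s, lam i)
    {i j : ι} (hi : i ∈ s) (hj : j ∉ s) : lam j ≤ lam i := by
  classical
  have hj' : j ∉ s.erase i := fun h => hj (Finset.mem_of_mem_erase h)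
  have h_card : (insert j (s.erase i)).card = s.card := by
    rw [Finset.card_insert_of_notMem hj', Finset.card_erase_add_one hi]
  have h_swap := h_max _ h_card
  rw [Finset.sum_insert hj', ← Finset.add_sum_erase s lam hi] at h_swap
  linarith

variable [Fintype ι]

theorem sum_le_card_mul_add_sum_posPart (s : Finset ι) (t : ℝ) :
    ∑ i ∈ s, lam i ≤ s.card * t + ∑ i, (lam i - t)⁺ :=
  calc ∑ i ∈ s, lam i
      ≤ ∑ i ∈ s, (t + (lam i - t)⁺) :=
        Finset.sum_le_sum fun i _ => by linarith [le_posPart (lam i - t)]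
    _ = s.card * t + ∑ i ∈ s, (lam i - t)⁺ := by
        rw [Finset.sum_add_distrib, Finset.sum_const, nsmul_eq_mul]
    _ ≤ s.card * t + ∑ i, (lam i - t)⁺ :=
        add_le_add_right (Finset.sum_le_univ_sum_of_nonneg fun i => posPart_nonneg (lam i - t)) _

theorem sum_eq_card_mul_add_sum_posPart {s : Finset ι} {t : ℝ}
    (h_mem : ∀ i ∈ s, t ≤ lam i) (h_not_mem : ∀ i ∉ s, lam i ≤ t) :
    ∑ i ∈ s, lam i = s.card * t + ∑ i, (lam i - t)⁺ := by
  have h_support : ∑ i, (lam i - t)⁺ = ∑ i ∈ s, (lam i - t) := by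
    rw [← Finset.sum_subset (Finset.subset_univ s)
      fun i _ hi => posPart_eq_zero.mpr (sub_nonpos.mpr (h_not_mem i hi))]
    exact Finset.sum_congr rfl fun i hi => posPart_eq_self.mpr (sub_nonneg.mpr (h_mem i hi))
  rw [h_support, Finset.sum_sub_distrib, Finset.sum_const, nsmul_eq_mul]
  ring

theorem isLeast_card_mul_add_sum_posPart (h_nonneg : ∀ i, 0 ≤ lam i) {k : ℕ} (hk1 : 1 ≤ k)
    (hk : k ≤ Fintype.card ι) :
    IsLeast {v : ℝ | ∃ t : ℝ, 0 ≤ t ∧ v = k * t + ∑ i, (lam i - t)⁺}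
      (sSup {v : ℝ | ∃ s : Finset ι, s.card = k ∧ v = ∑ i ∈ s, lam i}) := by
  obtain ⟨s₀, hs₀, h_max⟩ := (Finset.univ.powersetCard k).exists_max_image
    (fun s => ∑ i ∈ s, lam i) (Finset.powersetCard_nonempty.mpr (by simpa using hk))
  replace hs₀ : s₀.card = k := (Finset.mem_powersetCard_univ.mp hs₀)
  replace h_max : ∀ s : Finset ι, s.card = k → ∑ i ∈ s, lam i ≤ ∑ i ∈ s₀, lam i :=
    fun s hs => h_max s (Finset.mem_powersetCard_univ.mpr hs)
  obtain ⟨i₀, hi₀, h_min⟩ := s₀.exists_min_image lam (Finset.card_pos.mp (by omega))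
  have h_eq : ∑ i ∈ s₀, lam i = k * lam i₀ + ∑ i, (lam i - lam i₀)⁺ := by
    rw [← hs₀]
    refine sum_eq_card_mul_add_sum_posPart lam h_min fun j hj => ?_
    exact apply_le_of_mem_of_notMem_of_sum_maximal lam (by rwa [hs₀]) hi₀ hj
  have h_sup : sSup {v : ℝ | ∃ s : Finset ι, s.card = k ∧ v = ∑ i ∈ s, lam i}
      = ∑ i ∈ s₀, lam i := by
    refine IsGreatest.csSup_eq ⟨⟨s₀, hs₀, rfl⟩, ?_⟩
    rintro _ ⟨s, hs, rfl⟩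
    exact h_max s hs
  rw [h_sup]
  refine ⟨⟨lam i₀, h_nonneg i₀, h_eq⟩, ?_⟩
  rintro _ ⟨t, -, rfl⟩
  simpa only [hs₀] using sum_le_card_mul_add_sum_posPart lam s₀ t

end ThresholdSum

section TraceOfPosPart

open scoped MatrixOrder

theorem _root_.Matrix.PosSemidef.sqrt_eq_cfcSqrt {m : Type*} [Fintype m] [DecidableEq m]
    {A : Matrix m m ℂ} (hA : A.PosSemidef) : hA.sqrt = CFC.sqrt A := by
  rw [CFC.sqrt_eq_real_sqrt A hA.nonneg, cfcₙ_eq_cfc, hA.1.cfc_eq]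
  rfl

theorem _root_.Matrix.IsHermitian.trace_cfc {m : Type*} [Fintype m] [DecidableEq m] {𝕜 : Type*}
    [RCLike 𝕜] {A : Matrix m m 𝕜} (hA : A.IsHermitian) (f : ℝ → ℝ) :
    (cfc f A).trace = ∑ i, (f (hA.eigenvalues i) : 𝕜) := by
  rw [hA.cfc_eq, IsHermitian.cfc, Unitary.conjStarAlgAut_apply, trace_mul_cycle,
    Unitary.coe_star_mul_self, one_mul, trace_diagonal]
  rfl

theorem absMat_eq_cfcAbs (H : Matrix (Fin n) (Fin n) ℂ) : absMat H = CFC.abs H := by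
  rw [absMat, Matrix.PosSemidef.sqrt_eq_cfcSqrt, CFC.abs, Matrix.star_eq_conjTranspose]

theorem posPart_eq_cfcPosPart {H : Matrix (Fin n) (Fin n) ℂ} (hH : H.IsHermitian) :
    posPart H = H⁺ := by
  rw [posPart, absMat_eq_cfcAbs, CFC.abs_add_self H hH.isSelfAdjoint, two_nsmul,
    ← two_smul ℂ, smul_smul]
  norm_num

theorem trace_posPart_sub_smul_one {Y : Matrix (Fin n) (Fin n) ℂ} (hY : Y.IsHermitian) (t : ℝ) :
    (posPart (Y - (t : ℂ) • 1)).trace.re = ∑ i, (hY.eigenvalues i - t)⁺ := by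
  have h_shift : Y - (t : ℂ) • 1 = cfc (fun x : ℝ => x - t) Y := by
    rw [cfc_sub .., cfc_id' .., cfc_const .., Algebra.algebraMap_eq_smul_one, Complex.coe_smul]
  rw [h_shift, posPart_eq_cfcPosPart (cfc_predicate (fun x : ℝ => x - t) Y), CFC.posPart_def,
    cfcₙ_eq_cfc, ← cfc_comp' .., hY.trace_cfc]
  simp

end TraceOfPosPart

/-- Ky Fan threshold formula: the sum of the `k` largest
eigenvalues of `Y ≥ 0` is the minimum over `t ≥ 0` of `k·t + Tr((Y - tI)₊)`. -/
theorem kyfan_threshold_formula {n : ℕ} (Y : Matrix (Fin n) (Fin n) ℂ)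
    (hY : Y.PosSemidef) (k : ℕ) (hk1 : 1 ≤ k) (hkn : k ≤ n) :
    IsLeast
      {v : ℝ | ∃ t : ℝ, 0 ≤ t ∧
        v = k * t + (posPart (Y - (t : ℂ) • 1)).trace.re}
      (sSup {v : ℝ | ∃ s : Finset (Fin n), s.card = k ∧
        v = ∑ i ∈ s, hY.isHermitian.eigenvalues i}) := by
  simpa only [trace_posPart_sub_smul_one hY.isHermitian] using
    isLeast_card_mul_add_sum_posPart hY.isHermitian.eigenvalues hY.eigenvalues_nonneg hk1
      (by simpa using hkn)

end Heron
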